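/- arXiv:1010.4221 — 3 statements merged into one kernel-verified Lean document; each statement's English description precedes it below -/
import Mathlib

section
/- Let W₁, W₂, V₁, V₂ : ℝ² → ℂ be smooth functions satisfying ∂ₓW₁ = ∂_yV₂, ∂ₓW₂ = −∂ₓV₂, ∂_yW₁ = −∂_yV₁, ∂_yW₂ = ∂ₓV₁, and ∂ₓV₁ + ∂_yV₂ = ∂ₓW₁ + ∂_yW₂ = −1 (the constant function −1). Define operators on smooth functions f : ℝ² → ℂ by Q f = −i ∂ₓ f − V₂ f, P f = −i ∂_y f + V₁ f, Q′ f = −i ∂_y f − W₁ f, P′ f = −i ∂ₓ f + W₂ f. Then for every smooth f : ℝ² → ℂ one has (QP − PQ) f = i f, (Q′P′ − P′Q′) f = i f, and (QP′ − P′Q) f = (Q′P − PQ′) f = (QQ′ − Q′Q) f = (PP′ − P′P) f = 0. -/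
open MeasureTheory


noncomputable def Dv (w : ℝ × ℝ) (f : ℝ × ℝ → ℂ) : ℝ × ℝ → ℂ := fun p => fderiv ℝ f p w

lemma contDiff_Dv {f : ℝ × ℝ → ℂ} (hf : ContDiff ℝ (⊤ : ℕ∞) f) (w : ℝ × ℝ) :
    ContDiff ℝ (⊤ : ℕ∞) (Dv w f) :=
  (ContinuousLinearMap.apply ℝ ℂ w).contDiff.comp (hf.fderiv_right (by simp))

lemma Dv_eq_snd {f : ℝ × ℝ → ℂ} (hf : ContDiff ℝ (⊤ : ℕ∞) f) (v w p) :
    Dv v (Dv w f) p = fderiv ℝ (fderiv ℝ f) p v w := by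
  have hF : DifferentiableAt ℝ (fderiv ℝ f) p :=
    ((hf.fderiv_right (m := (⊤ : ℕ∞)) (by simp)).differentiable (by simp)) p
  have := ((ContinuousLinearMap.apply ℝ ℂ w).hasFDerivAt.comp p hF.hasFDerivAt).fderiv
  rw [show Dv w f = ⇑((ContinuousLinearMap.apply ℝ ℂ) w) ∘ fderiv ℝ f from rfl]
  simp [Dv, this]

lemma Dv_symm {f : ℝ × ℝ → ℂ} (hf : ContDiff ℝ (⊤ : ℕ∞) f) (v w p) :
    Dv v (Dv w f) p = Dv w (Dv v f) p := by
  rw [Dv_eq_snd hf, Dv_eq_snd hf]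
  exact second_derivative_symmetric (fun y => (hf.differentiable (by simp) y).hasFDerivAt)
    (((hf.fderiv_right (m := (⊤ : ℕ∞)) (by simp)).differentiable (by simp) p).hasFDerivAt) v w

noncomputable def Op (w : ℝ × ℝ) (c : ℂ) (g : ℝ × ℝ → ℂ) (f : ℝ × ℝ → ℂ) : ℝ × ℝ → ℂ :=
  fun p => -Complex.I * Dv w f p + c * (g p * f p)

lemma Dv_Op {g f : ℝ × ℝ → ℂ} (hg : ContDiff ℝ (⊤ : ℕ∞) g) (hf : ContDiff ℝ (⊤ : ℕ∞) f)
    (w₁ w : ℝ × ℝ) (c : ℂ) (p : ℝ × ℝ) :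
    Dv w₁ (Op w c g f) p
      = -Complex.I * Dv w₁ (Dv w f) p + c * (Dv w₁ g p * f p + g p * Dv w₁ f p) := by
  have hDf : DifferentiableAt ℝ (Dv w f) p := ((contDiff_Dv hf w).differentiable (by simp)) p
  have hg' : DifferentiableAt ℝ g p := (hg.differentiable (by simp)) p
  have hf' : DifferentiableAt ℝ f p := (hf.differentiable (by simp)) p
  have hgf : DifferentiableAt ℝ (fun y => g y * f y) p := hg'.mul hf'
  show fderiv ℝ (fun q => -Complex.I * Dv w f q + c * (g q * f q)) p w₁ = _
  rw [fderiv_fun_add (hDf.const_mul _) (hgf.const_mul _),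
    fderiv_const_mul hDf, fderiv_const_mul hgf, fderiv_fun_mul hg' hf']
  simp [Dv]; ring

lemma comm_Op {g₁ g₂ f : ℝ × ℝ → ℂ} (hg₁ : ContDiff ℝ (⊤ : ℕ∞) g₁) (hg₂ : ContDiff ℝ (⊤ : ℕ∞) g₂)
    (hf : ContDiff ℝ (⊤ : ℕ∞) f) (w₁ w₂ : ℝ × ℝ) (c₁ c₂ : ℂ) :
    Op w₁ c₁ g₁ (Op w₂ c₂ g₂ f) - Op w₂ c₂ g₂ (Op w₁ c₁ g₁ f)
      = fun p => -Complex.I * (c₂ * Dv w₁ g₂ p - c₁ * Dv w₂ g₁ p) * f p := by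
  funext p
  have e1 := Dv_Op hg₂ hf w₁ w₂ c₂ p
  have e2 := Dv_Op hg₁ hf w₂ w₁ c₁ p
  have e3 := Dv_symm hf w₁ w₂ p
  simp only [Pi.sub_apply, Op, e1, e2, e3]
  ring

/-- Partial derivative in the `x`-direction of a function on `ℝ²`. -/
noncomputable def pdx (f : ℝ × ℝ → ℂ) : ℝ × ℝ → ℂ := fun p => fderiv ℝ f p (1, 0)

/-- Partial derivative in the `y`-direction of a function on `ℝ²`. -/
noncomputable def pdy (f : ℝ × ℝ → ℂ) : ℝ × ℝ → ℂ := fun p => fderiv ℝ f p (0, 1)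

/-- `Q f = −i ∂ₓ f − V₂ f`. -/
noncomputable def Qop (V₂ : ℝ × ℝ → ℂ) (f : ℝ × ℝ → ℂ) : ℝ × ℝ → ℂ :=
  fun p => -Complex.I * pdx f p - V₂ p * f p

/-- `P f = −i ∂_y f + V₁ f`. -/
noncomputable def Pop (V₁ : ℝ × ℝ → ℂ) (f : ℝ × ℝ → ℂ) : ℝ × ℝ → ℂ :=
  fun p => -Complex.I * pdy f p + V₁ p * f p

/-- `Q′ f = −i ∂_y f − W₁ f`. -/
noncomputable def Q'op (W₁ : ℝ × ℝ → ℂ) (f : ℝ × ℝ → ℂ) : ℝ × ℝ → ℂ :=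
  fun p => -Complex.I * pdy f p - W₁ p * f p

/-- `P′ f = −i ∂ₓ f + W₂ f`. -/
noncomputable def P'op (W₂ : ℝ × ℝ → ℂ) (f : ℝ × ℝ → ℂ) : ℝ × ℝ → ℂ :=
  fun p => -Complex.I * pdx f p + W₂ p * f p

lemma Qop_eq (V₂ : ℝ × ℝ → ℂ) : Qop V₂ = Op (1, 0) (-1) V₂ := by
  funext f p; simp only [Qop, Op, pdx, Dv]; ring
lemma Pop_eq (V₁ : ℝ × ℝ → ℂ) : Pop V₁ = Op (0, 1) 1 V₁ := by
  funext f p; simp only [Pop, Op, pdy, Dv]; ring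
lemma Q'op_eq (W₁ : ℝ × ℝ → ℂ) : Q'op W₁ = Op (0, 1) (-1) W₁ := by
  funext f p; simp only [Q'op, Op, pdy, Dv]; ring
lemma P'op_eq (W₂ : ℝ × ℝ → ℂ) : P'op W₂ = Op (1, 0) 1 W₂ := by
  funext f p; simp only [P'op, Op, pdx, Dv]; ring


theorem statement0 (W₁ W₂ V₁ V₂ : ℝ × ℝ → ℂ)
    (hW₁ : ContDiff ℝ (⊤ : ℕ∞) W₁) (hW₂ : ContDiff ℝ (⊤ : ℕ∞) W₂)
    (hV₁ : ContDiff ℝ (⊤ : ℕ∞) V₁) (hV₂ : ContDiff ℝ (⊤ : ℕ∞) V₂)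
    (h1 : pdx W₁ = pdy V₂)
    (h2 : pdx W₂ = fun p => -pdx V₂ p)
    (h3 : pdy W₁ = fun p => -pdy V₁ p)
    (h4 : pdy W₂ = pdx V₁)
    (h5 : (fun p => pdx V₁ p + pdy V₂ p) = fun _ : ℝ × ℝ => (-1 : ℂ))
    (h6 : (fun p => pdx W₁ p + pdy W₂ p) = fun _ : ℝ × ℝ => (-1 : ℂ)) :
    ∀ f : ℝ × ℝ → ℂ, ContDiff ℝ (⊤ : ℕ∞) f →
      (Qop V₂ (Pop V₁ f) - Pop V₁ (Qop V₂ f) = fun p => Complex.I * f p) ∧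
      (Q'op W₁ (P'op W₂ f) - P'op W₂ (Q'op W₁ f) = fun p => Complex.I * f p) ∧
      Qop V₂ (P'op W₂ f) - P'op W₂ (Qop V₂ f) = 0 ∧
      Q'op W₁ (Pop V₁ f) - Pop V₁ (Q'op W₁ f) = 0 ∧
      Qop V₂ (Q'op W₁ f) - Q'op W₁ (Qop V₂ f) = 0 ∧
      Pop V₁ (P'op W₂ f) - P'op W₂ (Pop V₁ f) = 0 := by
  intro f hf
  have e1 := congrFun h1
  have e2 := congrFun h2
  have e3 := congrFun h3
  have e4 := congrFun h4
  have e5 := congrFun h5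
  have e6 := congrFun h6
  simp only [pdx, pdy] at e1 e2 e3 e4 e5 e6
  refine ⟨?_, ?_, ?_, ?_, ?_, ?_⟩
  · rw [Qop_eq, Pop_eq, comm_Op hV₂ hV₁ hf]
    funext p
    have := e5 p
    simp only [Dv]
    linear_combination (-Complex.I * f p) * this
  · rw [Q'op_eq, P'op_eq, comm_Op hW₁ hW₂ hf]
    funext p
    have := e6 p
    simp only [Dv]
    linear_combination (-Complex.I * f p) * this
  · rw [Qop_eq, P'op_eq, comm_Op hV₂ hW₂ hf]
    funext p
    have := e2 p
    simp only [Dv, Pi.zero_apply]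
    linear_combination (-Complex.I * f p) * this
  · rw [Q'op_eq, Pop_eq, comm_Op hW₁ hV₁ hf]
    funext p
    have := e3 p
    simp only [Dv, Pi.zero_apply]
    linear_combination (-Complex.I * f p) * this
  · rw [Qop_eq, Q'op_eq, comm_Op hV₂ hW₁ hf]
    funext p
    have := e1 p
    simp only [Dv, Pi.zero_apply]
    linear_combination (Complex.I * f p) * this
  · rw [Pop_eq, P'op_eq, comm_Op hV₁ hW₂ hf]
    funext p
    have := e4 p
    simp only [Dv, Pi.zero_apply]
    linear_combination (-Complex.I * f p) * this
end

section
/- Let W₁, W₂, V₁, V₂ : ℝ² → ℂ be smooth functions satisfying ∂ₓW₁ = ∂_yV₂, ∂ₓW₂ = −∂ₓV₂, ∂_yW₁ = −∂_yV₁, ∂_yW₂ = ∂ₓV₁, and ∂ₓV₁ + ∂_yV₂ = ∂ₓW₁ + ∂_yW₂ = −1, and let α, γ, α′, γ′ ∈ ℂ with αγ = 1/2 and α′γ′ = 1/2. Define A = α(Q + iP), B = γ(Q − iP), A′ = α′(Q′ + iP′), B′ = γ′(Q′ − iP′). Then for every smooth f : ℝ² → ℂ one has (AB − BA) f = f, (A′B′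 − B′A′) f = f, and each of A, B commutes with each of A′, B′ on smooth functions: (AA′ − A′A) f = (AB′ − B′A) f = (BA′ − A′B) f = (BB′ − B′B) f = 0. -/
open MeasureTheory

/-- `A = α(Q + iP)`. -/
noncomputable def Aop (V₁ V₂ : ℝ × ℝ → ℂ) (α : ℂ) (f : ℝ × ℝ → ℂ) : ℝ × ℝ → ℂ :=
  fun p => α * (Qop V₂ f p + Complex.I * Pop V₁ f p)

/-- `B = γ(Q − iP)`. -/
noncomputable def Bop (V₁ V₂ : ℝ × ℝ → ℂ) (γ : ℂ) (f : ℝ × ℝ → ℂ) : ℝ × ℝ → ℂ :=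
  fun p => γ * (Qop V₂ f p - Complex.I * Pop V₁ f p)

/-- `A′ = α′(Q′ + iP′)`. -/
noncomputable def A'op (W₁ W₂ : ℝ × ℝ → ℂ) (α' : ℂ) (f : ℝ × ℝ → ℂ) : ℝ × ℝ → ℂ :=
  fun p => α' * (Q'op W₁ f p + Complex.I * P'op W₂ f p)

/-- `B′ = γ′(Q′ − iP′)`. -/
noncomputable def B'op (W₁ W₂ : ℝ × ℝ → ℂ) (γ' : ℂ) (f : ℝ × ℝ → ℂ) : ℝ × ℝ → ℂ :=
  fun p => γ' * (Q'op W₁ f p - Complex.I * P'op W₂ f p)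

lemma pdx_smooth {f : ℝ × ℝ → ℂ} (hf : ContDiff ℝ (⊤ : ℕ∞) f) : ContDiff ℝ (⊤ : ℕ∞) (pdx f) :=
  (hf.fderiv_right (by simp)).clm_apply contDiff_const

lemma pdy_smooth {f : ℝ × ℝ → ℂ} (hf : ContDiff ℝ (⊤ : ℕ∞) f) : ContDiff ℝ (⊤ : ℕ∞) (pdy f) :=
  (hf.fderiv_right (by simp)).clm_apply contDiff_const

lemma pdx_add {F G : ℝ × ℝ → ℂ} {p} (hF : DifferentiableAt ℝ F p) (hG : DifferentiableAt ℝ G p) :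
    pdx (fun q => F q + G q) p = pdx F p + pdx G p := by
  simp [pdx, fderiv_fun_add hF hG]

lemma pdy_add {F G : ℝ × ℝ → ℂ} {p} (hF : DifferentiableAt ℝ F p) (hG : DifferentiableAt ℝ G p) :
    pdy (fun q => F q + G q) p = pdy F p + pdy G p := by
  simp [pdy, fderiv_fun_add hF hG]

lemma pdx_const_mul {F : ℝ × ℝ → ℂ} {p} (c : ℂ) (hF : DifferentiableAt ℝ F p) :
    pdx (fun q => c * F q) p = c * pdx F p := by
  simp [pdx, fderiv_const_mul hF c]

lemma pdy_const_mul {F : ℝ × ℝ → ℂ} {p} (c : ℂ) (hF : DifferentiableAt ℝ F p) :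
    pdy (fun q => c * F q) p = c * pdy F p := by
  simp [pdy, fderiv_const_mul hF c]

lemma pdx_mul {F G : ℝ × ℝ → ℂ} {p} (hF : DifferentiableAt ℝ F p) (hG : DifferentiableAt ℝ G p) :
    pdx (fun q => F q * G q) p = pdx F p * G p + F p * pdx G p := by
  simp [pdx, fderiv_fun_mul hF hG]; ring

lemma pdy_mul {F G : ℝ × ℝ → ℂ} {p} (hF : DifferentiableAt ℝ F p) (hG : DifferentiableAt ℝ G p) :
    pdy (fun q => F q * G q) p = pdy F p * G p + F p * pdy G p := by
  simp [pdy, fderiv_fun_mul hF hG]; ring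

lemma pd_comm {f : ℝ × ℝ → ℂ} (hf : ContDiff ℝ (⊤ : ℕ∞) f) (p : ℝ × ℝ) :
    pdx (pdy f) p = pdy (pdx f) p := by
  have hd : DifferentiableAt ℝ (fderiv ℝ f) p :=
    ((hf.fderiv_right (m := 1) (WithTop.coe_le_coe.mpr le_top)).differentiable (by simp)) p
  have hsymm : IsSymmSndFDerivAt ℝ f p :=
    hf.contDiffAt.isSymmSndFDerivAt (by simp; exact WithTop.coe_le_coe.mpr (le_top : (2 : ℕ∞) ≤ ⊤))
  have h1 : pdx (pdy f) p = fderiv ℝ (fderiv ℝ f) p (1,0) (0,1) := by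
    unfold pdx pdy
    rw [fderiv_clm_apply hd (differentiableAt_const _)]
    simp
  have h2 : pdy (pdx f) p = fderiv ℝ (fderiv ℝ f) p (0,1) (1,0) := by
    unfold pdx pdy
    rw [fderiv_clm_apply hd (differentiableAt_const _)]
    simp
  rw [h1, h2, hsymm]

/-- canonical first-order operator -/
noncomputable def opc (c1 c2 : ℂ) (g f : ℝ × ℝ → ℂ) : ℝ × ℝ → ℂ :=
  fun p => c1 * pdx f p + c2 * pdy f p + g p * f p

lemma pdx_opc {g f : ℝ × ℝ → ℂ} (c1 c2 : ℂ) (hg : ContDiff ℝ (⊤ : ℕ∞) g) (hf : ContDiff ℝ (⊤ : ℕ∞) f)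
    (p : ℝ × ℝ) :
    pdx (opc c1 c2 g f) p =
      c1 * pdx (pdx f) p + c2 * pdx (pdy f) p + (pdx g p * f p + g p * pdx f p) := by
  have dx := (pdx_smooth hf).differentiable (by simp)
  have dy := (pdy_smooth hf).differentiable (by simp)
  have d1 : DifferentiableAt ℝ (fun q => c1 * pdx f q) p :=
    (dx p).const_mul _
  have d2 : DifferentiableAt ℝ (fun q => c2 * pdy f q) p :=
    (dy p).const_mul _
  have d12 : DifferentiableAt ℝ (fun q => c1 * pdx f q + c2 * pdy f q) p := d1.add d2
  have d3 : DifferentiableAt ℝ (fun q => g q * f q) p :=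
    ((hg.differentiable (by simp)) p).mul ((hf.differentiable (by simp)) p)
  unfold opc
  rw [pdx_add d12 d3, pdx_add d1 d2, pdx_const_mul c1 (dx p), pdx_const_mul c2 (dy p),
    pdx_mul ((hg.differentiable (by simp)) p) ((hf.differentiable (by simp)) p)]

lemma pdy_opc {g f : ℝ × ℝ → ℂ} (c1 c2 : ℂ) (hg : ContDiff ℝ (⊤ : ℕ∞) g) (hf : ContDiff ℝ (⊤ : ℕ∞) f)
    (p : ℝ × ℝ) :
    pdy (opc c1 c2 g f) p =
      c1 * pdy (pdx f) p + c2 * pdy (pdy f) p + (pdy g p * f p + g p * pdy f p) := by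
  have dx := (pdx_smooth hf).differentiable (by simp)
  have dy := (pdy_smooth hf).differentiable (by simp)
  have d1 : DifferentiableAt ℝ (fun q => c1 * pdx f q) p :=
    (dx p).const_mul _
  have d2 : DifferentiableAt ℝ (fun q => c2 * pdy f q) p :=
    (dy p).const_mul _
  have d3 : DifferentiableAt ℝ (fun q => g q * f q) p :=
    ((hg.differentiable (by simp)) p).mul ((hf.differentiable (by simp)) p)
  unfold opc
  rw [pdy_add (d1.fun_add d2) d3, pdy_add d1 d2, pdy_const_mul c1 (dx p), pdy_const_mul c2 (dy p),
    pdy_mul ((hg.differentiable (by simp)) p) ((hf.differentiable (by simp)) p)]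

lemma comm_opc {g1 g2 f : ℝ × ℝ → ℂ} (c1 c2 d1 d2 : ℂ)
    (hg1 : ContDiff ℝ (⊤ : ℕ∞) g1) (hg2 : ContDiff ℝ (⊤ : ℕ∞) g2) (hf : ContDiff ℝ (⊤ : ℕ∞) f) (p : ℝ × ℝ) :
    opc c1 c2 g1 (opc d1 d2 g2 f) p - opc d1 d2 g2 (opc c1 c2 g1 f) p
      = (c1 * pdx g2 p + c2 * pdy g2 p - (d1 * pdx g1 p + d2 * pdy g1 p)) * f p := by
  have e1 : opc c1 c2 g1 (opc d1 d2 g2 f) p =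
      c1 * pdx (opc d1 d2 g2 f) p + c2 * pdy (opc d1 d2 g2 f) p
        + g1 p * opc d1 d2 g2 f p := rfl
  have e2 : opc d1 d2 g2 (opc c1 c2 g1 f) p =
      d1 * pdx (opc c1 c2 g1 f) p + d2 * pdy (opc c1 c2 g1 f) p
        + g2 p * opc c1 c2 g1 f p := rfl
  rw [e1, e2, pdx_opc d1 d2 hg2 hf p, pdy_opc d1 d2 hg2 hf p,
    pdx_opc c1 c2 hg1 hf p, pdy_opc c1 c2 hg1 hf p]
  have hc := pd_comm hf p
  show _ + _ + g1 p * (d1 * pdx f p + d2 * pdy f p + g2 p * f p)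
      - (_ + _ + g2 p * (c1 * pdx f p + c2 * pdy f p + g1 p * f p)) = _
  rw [hc]
  ring

/-- mixed coefficient function `a•u + b•v` -/
noncomputable def gmix (a b : ℂ) (u v : ℝ × ℝ → ℂ) : ℝ × ℝ → ℂ := fun p => a * u p + b * v p

lemma gmix_smooth (a b : ℂ) {u v : ℝ × ℝ → ℂ} (hu : ContDiff ℝ (⊤ : ℕ∞) u) (hv : ContDiff ℝ (⊤ : ℕ∞) v) :
    ContDiff ℝ (⊤ : ℕ∞) (gmix a b u v) :=
  (contDiff_const.mul hu).add (contDiff_const.mul hv)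

lemma pdx_gmix (a b : ℂ) {u v : ℝ × ℝ → ℂ} (hu : ContDiff ℝ (⊤ : ℕ∞) u) (hv : ContDiff ℝ (⊤ : ℕ∞) v)
    (p : ℝ × ℝ) : pdx (gmix a b u v) p = a * pdx u p + b * pdx v p := by
  unfold gmix
  rw [pdx_add (((hu.differentiable (by simp)) p).const_mul _)
      (((hv.differentiable (by simp)) p).const_mul _),
    pdx_const_mul a ((hu.differentiable (by simp)) p),
    pdx_const_mul b ((hv.differentiable (by simp)) p)]

lemma pdy_gmix (a b : ℂ) {u v : ℝ × ℝ → ℂ} (hu : ContDiff ℝ (⊤ : ℕ∞) u) (hv : ContDiff ℝ (⊤ : ℕ∞) v)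
    (p : ℝ × ℝ) : pdy (gmix a b u v) p = a * pdy u p + b * pdy v p := by
  unfold gmix
  rw [pdy_add (((hu.differentiable (by simp)) p).const_mul _)
      (((hv.differentiable (by simp)) p).const_mul _),
    pdy_const_mul a ((hu.differentiable (by simp)) p),
    pdy_const_mul b ((hv.differentiable (by simp)) p)]

lemma Aop_eq (V₁ V₂ : ℝ × ℝ → ℂ) (α : ℂ) (f : ℝ × ℝ → ℂ) :
    Aop V₁ V₂ α f = opc (-(Complex.I * α)) α (gmix (α * Complex.I) (-α) V₁ V₂) f :=
  funext fun p => by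
    simp only [Aop, Qop, Pop, opc, gmix]
    have : Complex.I * Complex.I = -1 := Complex.I_mul_I
    linear_combination (-(pdy f p * α)) * this

lemma Bop_eq (V₁ V₂ : ℝ × ℝ → ℂ) (γ : ℂ) (f : ℝ × ℝ → ℂ) :
    Bop V₁ V₂ γ f = opc (-(Complex.I * γ)) (-γ) (gmix (-(γ * Complex.I)) (-γ) V₁ V₂) f :=
  funext fun p => by
    simp only [Bop, Qop, Pop, opc, gmix]
    have : Complex.I * Complex.I = -1 := Complex.I_mul_I
    linear_combination (pdy f p * γ) * this

lemma A'op_eq (W₁ W₂ : ℝ × ℝ → ℂ) (α' : ℂ) (f : ℝ × ℝ → ℂ) :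
    A'op W₁ W₂ α' f = opc α' (-(Complex.I * α')) (gmix (-α') (α' * Complex.I) W₁ W₂) f :=
  funext fun p => by
    simp only [A'op, Q'op, P'op, opc, gmix]
    have : Complex.I * Complex.I = -1 := Complex.I_mul_I
    linear_combination (-(pdx f p * α')) * this

lemma B'op_eq (W₁ W₂ : ℝ × ℝ → ℂ) (γ' : ℂ) (f : ℝ × ℝ → ℂ) :
    B'op W₁ W₂ γ' f = opc (-γ') (-(Complex.I * γ')) (gmix (-γ') (-(γ' * Complex.I)) W₁ W₂) f :=
  funext fun p => by
    simp only [B'op, Q'op, P'op, opc, gmix]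
    have : Complex.I * Complex.I = -1 := Complex.I_mul_I
    linear_combination (pdx f p * γ') * this

theorem statement1 (W₁ W₂ V₁ V₂ : ℝ × ℝ → ℂ)
    (hW₁ : ContDiff ℝ (⊤ : ℕ∞) W₁) (hW₂ : ContDiff ℝ (⊤ : ℕ∞) W₂)
    (hV₁ : ContDiff ℝ (⊤ : ℕ∞) V₁) (hV₂ : ContDiff ℝ (⊤ : ℕ∞) V₂)
    (h1 : pdx W₁ = pdy V₂)
    (h2 : pdx W₂ = fun p => -pdx V₂ p)
    (h3 : pdy W₁ = fun p => -pdy V₁ p)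
    (h4 : pdy W₂ = pdx V₁)
    (h5 : (fun p => pdx V₁ p + pdy V₂ p) = fun _ : ℝ × ℝ => (-1 : ℂ))
    (h6 : (fun p => pdx W₁ p + pdy W₂ p) = fun _ : ℝ × ℝ => (-1 : ℂ))
    (α γ α' γ' : ℂ) (hαγ : α * γ = 1 / 2) (hα'γ' : α' * γ' = 1 / 2) :
    ∀ f : ℝ × ℝ → ℂ, ContDiff ℝ (⊤ : ℕ∞) f →
      (Aop V₁ V₂ α (Bop V₁ V₂ γ f) - Bop V₁ V₂ γ (Aop V₁ V₂ α f) = f) ∧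
      (A'op W₁ W₂ α' (B'op W₁ W₂ γ' f) - B'op W₁ W₂ γ' (A'op W₁ W₂ α' f) = f) ∧
      Aop V₁ V₂ α (A'op W₁ W₂ α' f) - A'op W₁ W₂ α' (Aop V₁ V₂ α f) = 0 ∧
      Aop V₁ V₂ α (B'op W₁ W₂ γ' f) - B'op W₁ W₂ γ' (Aop V₁ V₂ α f) = 0 ∧
      Bop V₁ V₂ γ (A'op W₁ W₂ α' f) - A'op W₁ W₂ α' (Bop V₁ V₂ γ f) = 0 ∧
      Bop V₁ V₂ γ (B'op W₁ W₂ γ' f) - B'op W₁ W₂ γ' (Bop V₁ V₂ γ f) = 0 := by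
  intro f hf
  have hI : Complex.I * Complex.I = (-1 : ℂ) := Complex.I_mul_I
  have hgA := gmix_smooth (α * Complex.I) (-α) hV₁ hV₂
  have hgB := gmix_smooth (-(γ * Complex.I)) (-γ) hV₁ hV₂
  have hgA' := gmix_smooth (-α') (α' * Complex.I) hW₁ hW₂
  have hgB' := gmix_smooth (-γ') (-(γ' * Complex.I)) hW₁ hW₂
  refine ⟨?_, ?_, ?_, ?_, ?_, ?_⟩
  · funext p
    have hp : pdx V₁ p + pdy V₂ p = -1 := congrFun h5 p
    rw [Aop_eq, Bop_eq, Bop_eq, Aop_eq, Pi.sub_apply,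
      comm_opc _ _ _ _ hgA hgB hf p,
      pdx_gmix _ _ hV₁ hV₂ p, pdy_gmix _ _ hV₁ hV₂ p,
      pdx_gmix _ _ hV₁ hV₂ p, pdy_gmix _ _ hV₁ hV₂ p]
    linear_combination (2*α*γ*f p*pdx V₁ p) * hI + (-2*α*γ*f p) * hp + (2*f p) * hαγ
  · funext p
    have hp : pdx W₁ p + pdy W₂ p = -1 := congrFun h6 p
    rw [A'op_eq, B'op_eq, B'op_eq, A'op_eq, Pi.sub_apply,
      comm_opc _ _ _ _ hgA' hgB' hf p,
      pdx_gmix _ _ hW₁ hW₂ p, pdy_gmix _ _ hW₁ hW₂ p,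
      pdx_gmix _ _ hW₁ hW₂ p, pdy_gmix _ _ hW₁ hW₂ p]
    linear_combination (2*α'*γ'*f p*pdy W₂ p) * hI + (-2*α'*γ'*f p) * hp + (2*f p) * hα'γ'
  · funext p
    have e1 : pdx W₁ p = pdy V₂ p := congrFun h1 p
    have e2 : pdx W₂ p = -pdx V₂ p := congrFun h2 p
    have e3 : pdy W₁ p = -pdy V₁ p := congrFun h3 p
    have e4 : pdy W₂ p = pdx V₁ p := congrFun h4 p
    rw [Aop_eq, A'op_eq, A'op_eq, Aop_eq, Pi.sub_apply,
      comm_opc _ _ _ _ hgA hgA' hf p,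
      pdx_gmix _ _ hW₁ hW₂ p, pdy_gmix _ _ hW₁ hW₂ p,
      pdx_gmix _ _ hV₁ hV₂ p, pdy_gmix _ _ hV₁ hV₂ p, e1, e2, e3, e4, Pi.zero_apply]
    linear_combination (α*α'*(pdx V₂ p + pdy V₁ p)*f p) * hI
  · funext p
    have e1 : pdx W₁ p = pdy V₂ p := congrFun h1 p
    have e2 : pdx W₂ p = -pdx V₂ p := congrFun h2 p
    have e3 : pdy W₁ p = -pdy V₁ p := congrFun h3 p
    have e4 : pdy W₂ p = pdx V₁ p := congrFun h4 p
    rw [Aop_eq, B'op_eq, B'op_eq, Aop_eq, Pi.sub_apply,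
      comm_opc _ _ _ _ hgA hgB' hf p,
      pdx_gmix _ _ hW₁ hW₂ p, pdy_gmix _ _ hW₁ hW₂ p,
      pdx_gmix _ _ hV₁ hV₂ p, pdy_gmix _ _ hV₁ hV₂ p, e1, e2, e3, e4, Pi.zero_apply]
    linear_combination (α*γ'*(pdy V₁ p - pdx V₂ p)*f p) * hI
  · funext p
    have e1 : pdx W₁ p = pdy V₂ p := congrFun h1 p
    have e2 : pdx W₂ p = -pdx V₂ p := congrFun h2 p
    have e3 : pdy W₁ p = -pdy V₁ p := congrFun h3 p
    have e4 : pdy W₂ p = pdx V₁ p := congrFun h4 p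
    rw [Bop_eq, A'op_eq, A'op_eq, Bop_eq, Pi.sub_apply,
      comm_opc _ _ _ _ hgB hgA' hf p,
      pdx_gmix _ _ hW₁ hW₂ p, pdy_gmix _ _ hW₁ hW₂ p,
      pdx_gmix _ _ hV₁ hV₂ p, pdy_gmix _ _ hV₁ hV₂ p, e1, e2, e3, e4, Pi.zero_apply]
    linear_combination (γ*α'*(pdx V₂ p - pdy V₁ p)*f p) * hI
  · funext p
    have e1 : pdx W₁ p = pdy V₂ p := congrFun h1 p
    have e2 : pdx W₂ p = -pdx V₂ p := congrFun h2 p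
    have e3 : pdy W₁ p = -pdy V₁ p := congrFun h3 p
    have e4 : pdy W₂ p = pdx V₁ p := congrFun h4 p
    rw [Bop_eq, B'op_eq, B'op_eq, Bop_eq, Pi.sub_apply,
      comm_opc _ _ _ _ hgB hgB' hf p,
      pdx_gmix _ _ hW₁ hW₂ p, pdy_gmix _ _ hW₁ hW₂ p,
      pdx_gmix _ _ hV₁ hV₂ p, pdy_gmix _ _ hV₁ hV₂ p, e1, e2, e3, e4, Pi.zero_apply]
    linear_combination (-(γ*γ'*(pdx V₂ p + pdy V₁ p)*f p)) * hI
end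

section
/- Fix real k₁, k₂ and let φ₀₀(x,y) = (2π)^{−1/2} exp(−(1+2k₂)x²/4 − (1−2k₁)y²/4). Then for every n, l ∈ ℕ and every (x,y) ∈ ℝ²: (B′ⁿ φ₀₀)(x,y) = 2^{−n/2} (x + i y)ⁿ φ₀₀(x,y) and (Bˡ φ₀₀)(x,y) = iˡ 2^{−l/2} (x − i y)ˡ φ₀₀(x,y). Consequently φ_{n,0} = (2ⁿ n!)^{−1/2} (x+iy)ⁿ φ₀₀ and φ_{0,l} = iˡ (2ˡ l!)^{−1/2} (x−iy)ˡ φ₀₀, where φ_{n,l} = (n! l!)^{−1/2} B′ⁿ Bˡ φ₀₀. -/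
open MeasureTheory

/-- `B f = (1/√2)(−i ∂ₓ f − ∂_y f + ((i x/2)(1−2k₂) + (y/2)(1+2k₁)) f)`. -/
noncomputable def Bgll (k₁ k₂ : ℝ) (f : ℝ × ℝ → ℂ) : ℝ × ℝ → ℂ := fun p =>
  (Real.sqrt 2 : ℂ)⁻¹ * (-Complex.I * pdx f p - pdy f p +
    ((Complex.I * (p.1 : ℂ) / 2) * (1 - 2 * (k₂ : ℂ)) +
      ((p.2 : ℂ) / 2) * (1 + 2 * (k₁ : ℂ))) * f p)

/-- `B′ f = (1/√2)(−∂ₓ f − i ∂_y f + ((x/2)(1−2k₂) + (i y/2)(1+2k₁)) f)`. -/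
noncomputable def B'gll (k₁ k₂ : ℝ) (f : ℝ × ℝ → ℂ) : ℝ × ℝ → ℂ := fun p =>
  (Real.sqrt 2 : ℂ)⁻¹ * (-pdx f p - Complex.I * pdy f p +
    (((p.1 : ℂ) / 2) * (1 - 2 * (k₂ : ℂ)) +
      (Complex.I * (p.2 : ℂ) / 2) * (1 + 2 * (k₁ : ℂ))) * f p)

/-- `φ₀₀(x,y) = (2π)^{−1/2} exp(−(1+2k₂)x²/4 − (1−2k₁)y²/4)`. -/
noncomputable def phi00 (k₁ k₂ : ℝ) : ℝ × ℝ → ℂ := fun p =>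
  (Real.sqrt (2 * Real.pi) : ℂ)⁻¹ *
    Complex.exp (-(1 + 2 * (k₂ : ℂ)) * (p.1 : ℂ) ^ 2 / 4 -
      (1 - 2 * (k₁ : ℂ)) * (p.2 : ℂ) ^ 2 / 4)

/-- `φ_{n,l} = (n! l!)^{−1/2} B′ⁿ Bˡ φ₀₀`. -/
noncomputable def phiNL (k₁ k₂ : ℝ) (n l : ℕ) : ℝ × ℝ → ℂ := fun p =>
  (Real.sqrt (n.factorial * l.factorial) : ℂ)⁻¹ *
    ((B'gll k₁ k₂)^[n] ((Bgll k₁ k₂)^[l] (phi00 k₁ k₂)) p)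

/-!
With `z = x + i y`, the product rule and `∂ₓφ₀₀ = -(1 + 2k₂) x/2 · φ₀₀`,
`∂_y φ₀₀ = -(1 - 2k₁) y/2 · φ₀₀` give
`B′(h φ₀₀) = 2^{-1/2} (z h - (∂ₓ + i ∂_y) h) φ₀₀` and
`B(h φ₀₀) = 2^{-1/2} (i z̄ h - (i ∂ₓ + ∂_y) h) φ₀₀`:
the Gaussian absorbs every term involving `k₁, k₂`. Since `∂ₓ + i ∂_y` annihilates `zⁿ` and
`i ∂ₓ + ∂_y` annihilates `z̄ⁿ`, applying `B′` to `zⁿ φ₀₀` multiplies it by `z / √2`, and applying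
`B` to `z̄ⁿ φ₀₀` multiplies it by `i z̄ / √2`.
-/

open Complex ContinuousLinearMap

lemma sqrt_pow_of_nonneg {x : ℝ} (hx : 0 ≤ x) (n : ℕ) : √(x ^ n) = √x ^ n := by
  rw [← Real.sqrt_sq (pow_nonneg (Real.sqrt_nonneg x) n), ← pow_mul, mul_comm, pow_mul,
    Real.sq_sqrt hx]

noncomputable def complexCoord (c : ℂ) : ℝ × ℝ →L[ℝ] ℂ :=
  ofRealCLM ∘L fst ℝ ℝ ℝ + c • (ofRealCLM ∘L snd ℝ ℝ ℝ)

@[simp]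
lemma complexCoord_apply (c : ℂ) (q : ℝ × ℝ) : complexCoord c q = q.1 + c * q.2 := rfl

section PartialDerivatives

variable {f : ℝ × ℝ → ℂ} {f' : ℝ × ℝ →L[ℝ] ℂ} {p : ℝ × ℝ}

lemma HasFDerivAt.pdx_eq (h : HasFDerivAt f f' p) : pdx f p = f' (1, 0) := by
  rw [pdx, h.fderiv]

lemma HasFDerivAt.pdy_eq (h : HasFDerivAt f f' p) : pdy f p = f' (0, 1) := by
  rw [pdy, h.fderiv]

end PartialDerivatives

section LadderOperators

variable (k₁ k₂ : ℝ)

lemma hasFDerivAt_phi00 (p : ℝ × ℝ) :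
    HasFDerivAt (phi00 k₁ k₂) (phi00 k₁ k₂ p •
      ((-(1 + 2 * (k₂ : ℂ)) * p.1 / 2) • (ofRealCLM ∘L fst ℝ ℝ ℝ) +
        (-(1 - 2 * (k₁ : ℂ)) * p.2 / 2) • (ofRealCLM ∘L snd ℝ ℝ ℝ))) p := by
  have hx := ((ofRealCLM ∘L fst ℝ ℝ ℝ).hasFDerivAt (x := p) |>.pow 2).const_mul
    (-(1 + 2 * (k₂ : ℂ)) / 4)
  have hy := ((ofRealCLM ∘L snd ℝ ℝ ℝ).hasFDerivAt (x := p) |>.pow 2).const_mul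
    ((1 - 2 * (k₁ : ℂ)) / 4)
  have hphi : phi00 k₁ k₂ = fun q => (Real.sqrt (2 * Real.pi) : ℂ)⁻¹ * cexp
      (-(1 + 2 * (k₂ : ℂ)) / 4 * (ofRealCLM ∘L fst ℝ ℝ ℝ) q ^ 2 -
        (1 - 2 * (k₁ : ℂ)) / 4 * (ofRealCLM ∘L snd ℝ ℝ ℝ) q ^ 2) := by
    funext q
    simp only [phi00, coe_comp, Function.comp_apply, coe_fst', coe_snd', ofRealCLM_apply]
    ring_nf
  rw [hphi]
  refine ((hx.sub hy).cexp.const_mul _).congr_fderiv ?_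
  ext <;> simp <;> ring

variable {k₁ k₂} {h : ℝ × ℝ → ℂ} {h' : ℝ × ℝ →L[ℝ] ℂ} {p : ℝ × ℝ}

lemma B'gll_mul_phi00 (hh : HasFDerivAt h h' p) :
    B'gll k₁ k₂ (fun q => h q * phi00 k₁ k₂ q) p =
      (Real.sqrt 2 : ℂ)⁻¹ * (complexCoord I p * h p - (h' (1, 0) + I * h' (0, 1))) *
        phi00 k₁ k₂ p := by
  have H : HasFDerivAt (fun q => h q * phi00 k₁ k₂ q) _ p := hh.mul (hasFDerivAt_phi00 k₁ k₂ p)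
  simp only [B'gll, H.pdx_eq, H.pdy_eq, add_apply, smul_apply, comp_apply, coe_fst', coe_snd',
    ofRealCLM_apply, ofReal_one, ofReal_zero, smul_eq_mul, complexCoord_apply]
  ring

lemma Bgll_mul_phi00 (hh : HasFDerivAt h h' p) :
    Bgll k₁ k₂ (fun q => h q * phi00 k₁ k₂ q) p =
      (Real.sqrt 2 : ℂ)⁻¹ * (I * complexCoord (-I) p * h p - (I * h' (1, 0) + h' (0, 1))) *
        phi00 k₁ k₂ p := by
  have H : HasFDerivAt (fun q => h q * phi00 k₁ k₂ q) _ p := hh.mul (hasFDerivAt_phi00 k₁ k₂ p)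
  simp only [Bgll, H.pdx_eq, H.pdy_eq, add_apply, smul_apply, comp_apply, coe_fst', coe_snd',
    ofRealCLM_apply, ofReal_one, ofReal_zero, smul_eq_mul, complexCoord_apply]
  linear_combination (Real.sqrt 2 : ℂ)⁻¹ * h p * phi00 k₁ k₂ p * p.2 * I_mul_I

variable (k₁ k₂)

lemma B'gll_coord_pow_mul_phi00 (C : ℂ) (n : ℕ) :
    B'gll k₁ k₂ (fun q => C * complexCoord I q ^ n * phi00 k₁ k₂ q) =
      fun q => (Real.sqrt 2 : ℂ)⁻¹ * C * complexCoord I q ^ (n + 1) * phi00 k₁ k₂ q := by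
  funext q
  rw [B'gll_mul_phi00 (((complexCoord I).hasFDerivAt (x := q) |>.pow n).const_mul C)]
  simp only [smul_apply, complexCoord_apply, smul_eq_mul, nsmul_eq_mul, ofReal_one, ofReal_zero]
  linear_combination
    -((Real.sqrt 2 : ℂ)⁻¹ * C * n * ((q.1 : ℂ) + I * q.2) ^ (n - 1) * phi00 k₁ k₂ q) * I_mul_I

lemma Bgll_coord_pow_mul_phi00 (C : ℂ) (n : ℕ) :
    Bgll k₁ k₂ (fun q => C * complexCoord (-I) q ^ n * phi00 k₁ k₂ q) =
      fun q => (Real.sqrt 2 : ℂ)⁻¹ * (I * C) * complexCoord (-I) q ^ (n + 1) * phi00 k₁ k₂ q := by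
  funext q
  rw [Bgll_mul_phi00 (((complexCoord (-I)).hasFDerivAt (x := q) |>.pow n).const_mul C)]
  simp only [smul_apply, complexCoord_apply, smul_eq_mul, nsmul_eq_mul, ofReal_one, ofReal_zero]
  ring

lemma B'gll_iterate_phi00 (n : ℕ) :
    (B'gll k₁ k₂)^[n] (phi00 k₁ k₂) =
      fun q => (Real.sqrt 2 : ℂ)⁻¹ ^ n * complexCoord I q ^ n * phi00 k₁ k₂ q := by
  induction n with
  | zero => simp
  | succ n ih => rw [Function.iterate_succ_apply', ih, B'gll_coord_pow_mul_phi00, pow_succ']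

lemma Bgll_iterate_phi00 (n : ℕ) :
    (Bgll k₁ k₂)^[n] (phi00 k₁ k₂) =
      fun q => (I * (Real.sqrt 2 : ℂ)⁻¹) ^ n * complexCoord (-I) q ^ n * phi00 k₁ k₂ q := by
  induction n with
  | zero => simp
  | succ n ih =>
    rw [Function.iterate_succ_apply', ih, Bgll_coord_pow_mul_phi00, pow_succ']
    ring_nf

end LadderOperators

theorem statement5 (k₁ k₂ : ℝ) (n l : ℕ) (p : ℝ × ℝ) :
    ((B'gll k₁ k₂)^[n] (phi00 k₁ k₂) p =
      (Real.sqrt 2 : ℂ)⁻¹ ^ n * ((p.1 : ℂ) + Complex.I * (p.2 : ℂ)) ^ n * phi00 k₁ k₂ p) ∧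
    ((Bgll k₁ k₂)^[l] (phi00 k₁ k₂) p =
      Complex.I ^ l * (Real.sqrt 2 : ℂ)⁻¹ ^ l *
        ((p.1 : ℂ) - Complex.I * (p.2 : ℂ)) ^ l * phi00 k₁ k₂ p) ∧
    (phiNL k₁ k₂ n 0 p =
      (Real.sqrt (2 ^ n * n.factorial) : ℂ)⁻¹ *
        ((p.1 : ℂ) + Complex.I * (p.2 : ℂ)) ^ n * phi00 k₁ k₂ p) ∧
    (phiNL k₁ k₂ 0 l p =
      Complex.I ^ l * (Real.sqrt (2 ^ l * l.factorial) : ℂ)⁻¹ *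
        ((p.1 : ℂ) - Complex.I * (p.2 : ℂ)) ^ l * phi00 k₁ k₂ p) := by
  have hB' := congrFun (B'gll_iterate_phi00 k₁ k₂ n) p
  have hB := congrFun (Bgll_iterate_phi00 k₁ k₂ l) p
  simp only [complexCoord_apply, neg_mul, ← sub_eq_add_neg, mul_pow] at hB' hB
  have hsqrt (m : ℕ) : √((2 : ℝ) ^ m * m.factorial) = √2 ^ m * √(m.factorial : ℝ) := by
    rw [Real.sqrt_mul (by positivity), sqrt_pow_of_nonneg zero_le_two]
  refine ⟨hB', hB, ?_, ?_⟩
  · simp only [phiNL, Function.iterate_zero, id_eq, hB', Nat.factorial_zero, Nat.cast_one,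
      mul_one, hsqrt, ofReal_mul, ofReal_pow, mul_inv, inv_pow]
    ring
  · simp only [phiNL, Function.iterate_zero, id_eq, hB, Nat.factorial_zero, Nat.cast_one,
      one_mul, hsqrt, ofReal_mul, ofReal_pow, mul_inv, inv_pow]
    ring
end
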